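/- arXiv:1011.1765 — 2 statements merged into one kernel-verified Lean document; each statement's English description precedes it below -/
import Mathlib

section
/- Let C > 0 and D ∈ ℕ. There exists k₁ ∈ ℕ \ {0} such that for every integer k ≥ k₁ and every integer j ≥ 2, setting ε_j = 1/j^k, one has C·[j(j+1)·|log ε_j|]^D · ε_j^{1 − 4/(j(j+1))} ≤ 1/(j+1)². -/
/-!
With `x = j ≥ 2` we have `|log ε_j| = k log x`, and the exponent `1 - 4/(x(x+1))` is at least `1/3`,
so `ε_j^(1 - 4/(x(x+1))) ≤ x^(-k/3)`. Since `x(x+1) log x ≤ x³` and `(x+1)² ≤ x⁴`, it suffices that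
`C k^D x^(3D+4) ≤ x^(k/3) = x^(k/6) · x^(k/6)`. Once `k ≥ 18D + 24` the first factor dominates
`x^(3D+4)`, and once `C k^D ≤ 2^(k/6)` the second dominates `C k^D`.
-/

open Real Filter

lemma abs_log_one_div_pow {x : ℝ} (hx : 1 ≤ x) (k : ℕ) : |log (1 / x ^ k)| = k * log x := by
  rw [one_div, log_inv, log_pow, abs_neg, abs_of_nonneg (by positivity [log_nonneg hx])]

lemma one_div_pow_rpow {x : ℝ} (hx : 0 ≤ x) (k : ℕ) (a : ℝ) :
    (1 / x ^ k) ^ a = 1 / x ^ ((k : ℝ) * a) := by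
  rw [div_rpow zero_le_one (by positivity), one_rpow, ← rpow_natCast, ← rpow_mul hx]

lemma one_third_le_one_sub_four_div {x : ℝ} (hx : 2 ≤ x) : 1 / 3 ≤ 1 - 4 / (x * (x + 1)) := by
  have : 4 / (x * (x + 1)) ≤ 2 / 3 := by
    rw [div_le_div_iff₀ (by positivity) (by norm_num)]; nlinarith
  linarith

lemma mul_add_one_mul_log_le_pow_three {x : ℝ} (hx : 0 < x) : x * (x + 1) * log x ≤ x ^ 3 :=
  calc x * (x + 1) * log x ≤ x * (x + 1) * (x - 1) := by
        gcongr; exact log_le_sub_one_of_pos hx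
    _ ≤ x ^ 3 := by nlinarith

lemma eventually_mul_pow_le_pow (C : ℝ) (D : ℕ) {b : ℝ} (hb : 1 < b) :
    ∀ᶠ k : ℕ in atTop, C * (k : ℝ) ^ D ≤ b ^ k := by
  have hC : 0 < |C| + 1 := by positivity
  filter_upwards [(tendsto_pow_const_div_const_pow_of_one_lt D hb).eventually
    (gt_mem_nhds (inv_pos.2 hC))] with k hk
  rw [div_lt_iff₀ (by positivity)] at hk
  calc C * (k : ℝ) ^ D ≤ (|C| + 1) * (k : ℝ) ^ D := by
        gcongr; linarith [le_abs_self C]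
    _ ≤ b ^ k := by
        rw [← le_div_iff₀' hC, div_eq_inv_mul]; exact hk.le

lemma eventually_mul_pow_le_two_rpow (C : ℝ) (D : ℕ) :
    ∀ᶠ k : ℕ in atTop, C * (k : ℝ) ^ D ≤ (2 : ℝ) ^ ((k : ℝ) / 6) := by
  have hb : (1 : ℝ) < 2 ^ ((1 : ℝ) / 6) := one_lt_rpow (by norm_num) (by norm_num)
  filter_upwards [eventually_mul_pow_le_pow C D hb] with k hk
  rwa [← rpow_natCast (2 ^ _) k, ← rpow_mul zero_le_two, one_div_mul_eq_div] at hk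

lemma mul_pow_mul_add_one_sq_le_rpow {C x : ℝ} (hC : 0 ≤ C) (hx : 2 ≤ x) {D k : ℕ}
    (hCk : C * (k : ℝ) ^ D ≤ (2 : ℝ) ^ ((k : ℝ) / 6)) (hDk : 18 * D + 24 ≤ k) :
    C * (x * (x + 1) * (k * log x)) ^ D * (x + 1) ^ 2 ≤ x ^ ((k : ℝ) / 3) := by
  have hx0 : 0 < x := by linarith
  have hlog : 0 ≤ log x := log_nonneg (by linarith)
  have hP : x * (x + 1) * (k * log x) ≤ k * x ^ 3 := by
    rw [mul_left_comm]
    exact mul_le_mul_of_nonneg_left (mul_add_one_mul_log_le_pow_three hx0) k.cast_nonneg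
  have hpow : x ^ (3 * D + 4) ≤ x ^ ((k : ℝ) / 6) := by
    have : ((18 * D + 24 : ℕ) : ℝ) ≤ k := by exact_mod_cast hDk
    rw [← rpow_natCast]
    exact rpow_le_rpow_of_exponent_le (by linarith) (by push_cast at this ⊢; linarith)
  calc C * (x * (x + 1) * (k * log x)) ^ D * (x + 1) ^ 2 ≤ C * (k * x ^ 3) ^ D * x ^ 4 := by
        have hsq : (x + 1) ^ 2 ≤ x ^ 4 := by nlinarith [mul_le_mul hx hx (by norm_num) hx0.le]
        gcongr
    _ = C * (k : ℝ) ^ D * x ^ (3 * D + 4) := by ring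
    _ ≤ (2 : ℝ) ^ ((k : ℝ) / 6) * x ^ ((k : ℝ) / 6) := by gcongr
    _ ≤ x ^ ((k : ℝ) / 6) * x ^ ((k : ℝ) / 6) := by gcongr
    _ = x ^ ((k : ℝ) / 3) := by rw [← rpow_add hx0]; ring_nf

/-- **Numerical lemma (Lemma 3.1).** For `C > 0` and `D ∈ ℕ` there is `k₁ ∈ ℕ \ {0}` such
that for all integers `k ≥ k₁` and `j ≥ 2`, with `ε_j = 1/j^k`,
`C·[j(j+1)|log ε_j|]^D · ε_j^(1 − 4/(j(j+1))) ≤ 1/(j+1)²`. -/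
theorem numerical_lemma (C : ℝ) (hC : 0 < C) (D : ℕ) :
    ∃ k₁ : ℕ, k₁ ≠ 0 ∧ ∀ k : ℕ, k₁ ≤ k → ∀ j : ℕ, 2 ≤ j →
      C * ((j : ℝ) * ((j : ℝ) + 1) * |Real.log (1 / (j : ℝ) ^ k)|) ^ D *
          (1 / (j : ℝ) ^ k) ^ ((1 : ℝ) - 4 / ((j : ℝ) * ((j : ℝ) + 1)))
        ≤ 1 / ((j : ℝ) + 1) ^ 2 := by
  obtain ⟨N, hN⟩ := (eventually_mul_pow_le_two_rpow C D).exists_forall_of_atTop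
  refine ⟨max N (18 * D + 24) + 1, by omega, fun k hk j hj => ?_⟩
  have hx : (2 : ℝ) ≤ j := by exact_mod_cast hj
  have hε : 1 / (j : ℝ) ^ k ≤ 1 := by
    rw [div_le_one (by positivity)]; exact one_le_pow₀ (by linarith)
  rw [abs_log_one_div_pow (by linarith) k]
  calc _ ≤ C * (j * (j + 1) * (k * log j)) ^ D * (1 / (j : ℝ) ^ k) ^ (1 / 3 : ℝ) := by
        refine mul_le_mul_of_nonneg_left ?_ (by positivity [log_nonneg (by linarith : (1 : ℝ) ≤ j)])
        exact rpow_le_rpow_of_exponent_ge (by positivity) hε (one_third_le_one_sub_four_div hx)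
    _ = C * (j * (j + 1) * (k * log j)) ^ D / (j : ℝ) ^ ((k : ℝ) / 3) := by
        rw [one_div_pow_rpow (by positivity), mul_one_div, mul_one_div]
    _ ≤ 1 / ((j : ℝ) + 1) ^ 2 := by
        rw [div_le_div_iff₀ (by positivity) (by positivity), one_mul]
        exact mul_pow_mul_add_one_sq_le_rpow hC.le hx (hN k (by omega)) (by omega)
end

section
/- Let B ∈ sl(2,ℝ) be a real 2×2 matrix of trace zero whose eigenvalues are purely imaginary, equal to ±iβ with β ∈ ℝ. Then for every nonzero vector φ ∈ ℝ² and every continuous function θ : [0,∞) → ℝ such that e^{tB}φ = |e^{tB}φ|·(cos θ(t), sin θ(t)) for all t ≥ 0, the limit lim_{t→+∞} θ(t)/t exists and its absolute value equals |β|. -/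
/-!
Identify `ℝ²` with `ℂ`. Since `tr B = 0`, Cayley–Hamilton gives `B² = -β²`, hence
`e^{tB} = cos (βt) + (sin (βt) / β) B` (or `1 + tB` if `β = 0`), and the curve `z(t) = e^{tB}φ`
is `A e^{iβt} + C e^{-iβt}` (resp. `p + t q`).

Whenever `z(t) = a e^{iωt} h(t)` with `h` continuous with values in the slit plane,
`ωt + arg a + arg h(t)` is a continuous lift of the argument of `z`. Any other continuous lift
differs from it by a continuous `2πℤ`-valued function on a half-line, i.e. by a constant; as
`|arg h| ≤ π`, this gives `θ(t)/t → ω`. Factoring out the dominant one of `A`, `C` gives such a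
decomposition with `ω = ±β`; they cannot have equal modulus, since `z` would then vanish.
In the parabolic case `ω = 0`.
-/

open Complex Filter Set Topology
open scoped Matrix.Norms.L2Operator

theorem Matrix.mul_self_eq_neg_det_smul_one_of_trace_eq_zero {R : Type*} [CommRing R]
    {B : Matrix (Fin 2) (Fin 2) R} (h : B.trace = 0) : B * B = -B.det • 1 := by
  have h11 : B 1 1 = -B 0 0 := by rw [Matrix.trace_fin_two] at h; linear_combination h
  ext i j
  fin_cases i <;> fin_cases j <;> simp [Matrix.mul_apply, Matrix.det_fin_two, h11] <;> ring

theorem NormedSpace.exp_eq_one_add_of_mul_self_eq_zero {𝔸 : Type*} [Ring 𝔸] [Algebra ℚ 𝔸]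
    [TopologicalSpace 𝔸] [IsTopologicalRing 𝔸] {x : 𝔸} (hx : x * x = 0) :
    NormedSpace.exp x = 1 + x := by
  have hpow : ∀ n ∉ ({0, 1} : Finset ℕ), ((n.factorial : ℚ))⁻¹ • x ^ n = 0 := by
    intro n hn
    obtain ⟨m, rfl⟩ : ∃ m, n = m + 2 := ⟨n - 2, by
      simp only [Finset.mem_insert, Finset.mem_singleton, not_or] at hn; omega⟩
    rw [pow_add, sq, hx, mul_zero, smul_zero]
  simp only [NormedSpace.exp_eq_tsum_rat]
  rw [tsum_eq_sum hpow, Finset.sum_pair zero_ne_one]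
  simp

theorem NormedSpace.exp_smul_eq_cos_add_sin {𝔸 : Type*} [NormedRing 𝔸] [NormedAlgebra ℝ 𝔸]
    [Algebra ℚ 𝔸] {x : 𝔸} {β : ℝ} (hβ : β ≠ 0) (hx : x * x = -(β ^ 2) • 1) (t : ℝ) :
    NormedSpace.exp (t • x) = Real.cos (β * t) • 1 + (Real.sin (β * t) / β) • x := by
  have hJ : (β⁻¹ • x) * (β⁻¹ • x) = -1 := by
    rw [smul_mul_smul_comm, hx, smul_smul, show β⁻¹ * β⁻¹ * -β ^ 2 = -1 by field_simp,
      neg_one_smul]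
  -- `β⁻¹ • x` plays the role of `i`, and `exp` commutes with the resulting embedding `ℂ → 𝔸`.
  set f := Complex.liftAux (β⁻¹ • x) hJ
  have hf : Continuous f := f.toLinearMap.continuous_of_finiteDimensional
  have hft : f ((β * t : ℝ) * I) = t • x := by
    rw [← real_smul, map_smul, Complex.liftAux_apply_I, smul_smul, mul_comm β,
      mul_inv_cancel_right₀ hβ]
  rw [← hft, ← NormedSpace.map_exp f hf, ← Complex.exp_eq_exp_ℂ, Complex.liftAux_apply,
    exp_ofReal_mul_I_re, exp_ofReal_mul_I_im, Algebra.algebraMap_eq_smul_one, smul_smul,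
    div_eq_mul_inv]

noncomputable def vecToComplex : (Fin 2 → ℝ) ≃ₗ[ℝ] ℂ :=
  (LinearEquiv.finTwoArrow ℝ ℝ).trans equivRealProdLm.symm

theorem vecToComplex_apply (v : Fin 2 → ℝ) : vecToComplex v = v 0 + v 1 * I := by
  apply Complex.ext <;> simp [vecToComplex]

theorem vecToComplex_eq_norm_mul_exp {v : Fin 2 → ℝ} {θ : ℝ}
    (h : v = Real.sqrt (v 0 ^ 2 + v 1 ^ 2) • ![Real.cos θ, Real.sin θ]) :
    vecToComplex v = ‖vecToComplex v‖ * exp (θ * I) := by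
  have hnorm : ‖vecToComplex v‖ = Real.sqrt (v 0 ^ 2 + v 1 ^ 2) := by
    simp [vecToComplex_apply, norm_def, normSq_apply, sq]
  conv_lhs => rw [h]
  rw [hnorm, map_smul, real_smul, vecToComplex_apply, exp_mul_I, ← ofReal_cos, ← ofReal_sin]
  simp

theorem vecToComplex_exp_smul_mulVec_of_mul_self_eq_zero {B : Matrix (Fin 2) (Fin 2) ℝ}
    (hB : B * B = 0) (φ : Fin 2 → ℝ) (t : ℝ) :
    vecToComplex ((NormedSpace.exp (t • B)).mulVec φ) =
      vecToComplex φ + t * vecToComplex (B.mulVec φ) := by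
  rw [NormedSpace.exp_eq_one_add_of_mul_self_eq_zero (by rw [smul_mul_smul_comm, hB, smul_zero]),
    Matrix.add_mulVec, Matrix.one_mulVec, Matrix.smul_mulVec, map_add, map_smul, real_smul]

theorem vecToComplex_exp_smul_mulVec_of_mul_self_eq {B : Matrix (Fin 2) (Fin 2) ℝ} {β : ℝ}
    (hβ : β ≠ 0) (hB : B * B = -(β ^ 2) • 1) (φ : Fin 2 → ℝ) (t : ℝ) :
    vecToComplex ((NormedSpace.exp (t • B)).mulVec φ) =
      cos (β * t) * vecToComplex φ + sin (β * t) * (vecToComplex (B.mulVec φ) / β) := by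
  rw [NormedSpace.exp_smul_eq_cos_add_sin hβ hB, Matrix.add_mulVec, Matrix.smul_mulVec,
    Matrix.smul_mulVec, Matrix.one_mulVec, map_add, map_smul, map_smul, real_smul, real_smul]
  push_cast
  ring

theorem cos_mul_add_sin_mul_eq (x : ℂ) (p q : ℂ) :
    cos x * p + sin x * q = (p - I * q) / 2 * exp (x * I) + (p + I * q) / 2 * exp (-(x * I)) := by
  rw [cos, sin, neg_mul]
  ring

theorem exists_mul_exp_add_mul_exp_eq_zero {A C : ℂ} {ω : ℝ} (hω : ω ≠ 0) (hAC : ‖A‖ = ‖C‖) :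
    ∃ t : ℝ, A * exp (ω * t * I) + C * exp (-(ω * t * I)) = 0 := by
  rcases eq_or_ne A 0 with rfl | hA
  · exact ⟨0, by simp [norm_eq_zero.1 (by simpa using hAC.symm : ‖C‖ = 0)]⟩
  · have hunit : ‖-C / A‖ = 1 := by
      rw [norm_div, norm_neg, hAC, div_self (hAC ▸ norm_ne_zero_iff.2 hA)]
    have hωC : (ω : ℂ) ≠ 0 := ofReal_ne_zero.2 hω
    set t₀ := arg (-C / A) / (2 * ω)
    have hexp : exp (ω * t₀ * I) ^ 2 = -C / A := by
      rw [← exp_nat_mul, show (2 : ℕ) * (ω * t₀ * I) = arg (-C / A) * I by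
        simp only [t₀]; push_cast; field_simp]
      have := norm_mul_exp_arg_mul_I (-C / A)
      rwa [hunit, ofReal_one, one_mul] at this
    refine ⟨t₀, ?_⟩
    rw [exp_neg]
    field_simp at hexp ⊢
    linear_combination hexp

theorem tendsto_div_atTop_of_abs_sub_mul_le {f : ℝ → ℝ} {ω M T : ℝ}
    (hf : ∀ t ≥ T, |f t - ω * t| ≤ M) : Tendsto (fun t => f t / t) atTop (𝓝 ω) := by
  have hO : (fun t => f t - ω * t) =o[atTop] id :=
    (Asymptotics.IsBigO.of_bound' (g := fun _ => M) (eventually_atTop.2 ⟨T, fun t ht => by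
      simpa using (hf t ht).trans (le_abs_self M)⟩)).trans_isLittleO
      (Asymptotics.isLittleO_const_id_atTop M)
  refine (add_zero ω ▸ tendsto_const_nhds.add hO.tendsto_div_nhds_zero).congr' ?_
  filter_upwards [eventually_ne_atTop 0] with t ht
  simp only [id]
  field_simp
  ring

def IsArgLift (z : ℝ → ℂ) (θ : ℝ → ℝ) (s : Set ℝ) : Prop :=
  ContinuousOn θ s ∧ ∀ t ∈ s, z t = ‖z t‖ * exp (θ t * I)

theorem isArgLift_of_eq_mul_exp_mul {z : ℝ → ℂ} {s : Set ℝ} {a : ℂ} {ω : ℝ} {h : ℝ → ℂ}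
    (hh : ContinuousOn h s) (hslit : ∀ t ∈ s, h t ∈ slitPlane)
    (hz : ∀ t ∈ s, z t = a * exp (ω * t * I) * h t) :
    IsArgLift z (fun t => ω * t + arg a + arg (h t)) s := by
  refine ⟨?_, fun t ht => ?_⟩
  · exact ((continuous_const.mul continuous_id).add continuous_const).continuousOn.add
      fun t ht => (continuousAt_arg (hslit t ht)).comp_continuousWithinAt (hh t ht)
  · conv_lhs => rw [hz t ht, ← norm_mul_exp_arg_mul_I a, ← norm_mul_exp_arg_mul_I (h t)]
    have hnorm : ‖exp (ω * t * I)‖ = 1 := by simp [norm_exp]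
    rw [hz t ht, norm_mul, norm_mul, hnorm]
    push_cast
    rw [add_mul, add_mul, exp_add, exp_add]
    ring

namespace IsArgLift

variable {z : ℝ → ℂ} {θ θ' : ℝ → ℝ} {s : Set ℝ}

theorem mono (h : IsArgLift z θ s) {s' : Set ℝ} (hs : s' ⊆ s) : IsArgLift z θ s' :=
  ⟨h.1.mono hs, fun t ht => h.2 t (hs ht)⟩

theorem sub_eq_sub (h : IsArgLift z θ s) (h' : IsArgLift z θ' s) (hs : IsPreconnected s)
    (hz : ∀ t ∈ s, z t ≠ 0) {t₀ t : ℝ} (ht₀ : t₀ ∈ s) (ht : t ∈ s) :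
    θ t - θ' t = θ t₀ - θ' t₀ := by
  refine hs.constant_of_mapsTo (T := AddSubgroup.zmultiples (2 * Real.pi))
    (SetLike.isDiscrete_iff_discreteTopology.2 inferInstance) (h.1.sub h'.1) (fun t ht => ?_)
    ht ht₀
  have hexp : exp (θ t * I) = exp (θ' t * I) :=
    mul_left_cancel₀ (by simpa using hz t ht) ((h.2 t ht).symm.trans (h'.2 t ht))
  obtain ⟨n, hn⟩ := (Circle.exp_eq_exp (x := θ t) (y := θ' t)).1 (Subtype.ext hexp)
  exact ⟨n, by simp only [zsmul_eq_mul, Pi.sub_apply, hn]; ring⟩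

theorem tendsto_div_atTop_of_eq_mul_exp_mul {T ω : ℝ} {a : ℂ} (ha : a ≠ 0) {h : ℝ → ℂ}
    (hh : ContinuousOn h (Ici T)) (hslit : ∀ t ∈ Ici T, h t ∈ slitPlane)
    (hz : ∀ t ∈ Ici T, z t = a * exp (ω * t * I) * h t) (hθ : IsArgLift z θ (Ici T)) :
    Tendsto (fun t => θ t / t) atTop (𝓝 ω) := by
  have hz₀ : ∀ t ∈ Ici T, z t ≠ 0 := fun t ht => by
    rw [hz t ht]
    exact mul_ne_zero (mul_ne_zero ha (exp_ne_zero _)) (slitPlane_ne_zero (hslit t ht))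
  have hlift' := isArgLift_of_eq_mul_exp_mul hh hslit hz
  set θ₀ := θ T - (ω * T + arg a + arg (h T))
  refine tendsto_div_atTop_of_abs_sub_mul_le (T := T) (M := |θ₀ + arg a| + Real.pi)
    fun t ht => ?_
  have hθt : θ t - ω * t = θ₀ + arg a + arg (h t) := by
    linarith [hθ.sub_eq_sub hlift' isPreconnected_Ici hz₀ self_mem_Ici (mem_Ici.2 ht)]
  calc |θ t - ω * t| = |θ₀ + arg a + arg (h t)| := by rw [hθt]
    _ ≤ |θ₀ + arg a| + |arg (h t)| := abs_add_le _ _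
    _ ≤ |θ₀ + arg a| + Real.pi := by linarith [abs_arg_le_pi (h t)]

theorem tendsto_div_atTop_of_eq_add_mul {p q : ℂ} (hp : p ≠ 0) (hz : ∀ t, z t = p + t * q)
    (hθ : IsArgLift z θ (Ici 0)) : Tendsto (fun t => θ t / t) atTop (𝓝 0) := by
  rcases eq_or_ne q 0 with rfl | hq
  · exact hθ.tendsto_div_atTop_of_eq_mul_exp_mul hp (h := 1) continuousOn_const
      (fun _ _ => one_mem_slitPlane) fun t _ => by simp [hz]
  · have hT : (0 : ℝ) ≤ ‖p / q‖ + 1 := by positivity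
    refine (hθ.mono (Ici_subset_Ici.2 hT)).tendsto_div_atTop_of_eq_mul_exp_mul hq
      (h := fun t => t + p / q) (by fun_prop) (fun t ht => mem_slitPlane_iff.2 (Or.inl ?_)) fun t _ => ?_
    · have := neg_abs_le (p / q).re
      have := abs_re_le_norm (p / q)
      simp only [add_re, ofReal_re]
      linarith [mem_Ici.1 ht]
    · rw [hz, ofReal_zero, zero_mul, zero_mul, exp_zero, mul_one, mul_add, mul_div_cancel₀ _ hq]
      ring

theorem tendsto_div_atTop_of_norm_lt {A C : ℂ} {ω : ℝ} (hCA : ‖C‖ < ‖A‖)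
    (hz : ∀ t, z t = A * exp (ω * t * I) + C * exp (-(ω * t * I)))
    (hθ : IsArgLift z θ (Ici 0)) : Tendsto (fun t => θ t / t) atTop (𝓝 ω) := by
  have hA : A ≠ 0 := norm_pos_iff.1 ((norm_nonneg C).trans_lt hCA)
  refine hθ.tendsto_div_atTop_of_eq_mul_exp_mul hA
    (h := fun t => 1 + C / A * exp (-(2 * ω * t * I))) (by fun_prop) (fun t _ => mem_slitPlane_of_norm_lt_one ?_) fun t _ => ?_
  · simpa [norm_exp, div_lt_one (norm_pos_iff.2 hA)] using hCA
  · have hexp : exp (ω * t * I) * exp (-(2 * ω * t * I)) = exp (-(ω * t * I)) := by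
      rw [← exp_add]; ring_nf
    rw [hz, ← hexp]
    field_simp

end IsArgLift

/-- **Rotation number of a constant `sl(2,ℝ)` cocycle.** If `B` is a real `2×2`
trace-zero matrix with purely imaginary eigenvalues `±iβ` (equivalently
`det B = β²`), then for any nonzero `φ ∈ ℝ²` and any continuous lift `θ` of the
polar angle of `t ↦ e^{tB}φ`, the limit `lim_{t→∞} θ(t)/t` exists and has
absolute value `|β|`. -/
theorem rotation_number_constant_cocycle
    (B : Matrix (Fin 2) (Fin 2) ℝ) (β : ℝ)
    (htr : B.trace = 0) (hdet : B.det = β ^ 2)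
    (φ : Fin 2 → ℝ) (hφ : φ ≠ 0) (θ : ℝ → ℝ)
    (hθcont : ContinuousOn θ (Set.Ici (0 : ℝ)))
    (hlift : ∀ t : ℝ, 0 ≤ t →
      (NormedSpace.exp (t • B)).mulVec φ =
        Real.sqrt (((NormedSpace.exp (t • B)).mulVec φ 0) ^ 2 +
            ((NormedSpace.exp (t • B)).mulVec φ 1) ^ 2)
          • ![Real.cos (θ t), Real.sin (θ t)]) :
    ∃ ρ : ℝ, Filter.Tendsto (fun t => θ t / t) Filter.atTop (nhds ρ) ∧ |ρ| = |β| := by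
  set z : ℝ → ℂ := fun t => vecToComplex ((NormedSpace.exp (t • B)).mulVec φ)
  have hθ : IsArgLift z θ (Ici 0) :=
    ⟨hθcont, fun t ht => vecToComplex_eq_norm_mul_exp (hlift t ht)⟩
  have hz₀ : ∀ t, z t ≠ 0 := fun t => vecToComplex.map_ne_zero_iff.2 fun h0 =>
    hφ (Matrix.mulVec_injective_of_isUnit (Matrix.isUnit_exp _)
      (h0.trans (Matrix.mulVec_zero _).symm))
  have hB : B * B = -(β ^ 2) • 1 := hdet ▸ B.mul_self_eq_neg_det_smul_one_of_trace_eq_zero htr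
  rcases eq_or_ne β 0 with rfl | hβ
  · exact ⟨0, hθ.tendsto_div_atTop_of_eq_add_mul (vecToComplex.map_ne_zero_iff.2 hφ)
      (vecToComplex_exp_smul_mulVec_of_mul_self_eq_zero (by simpa using hB) φ), rfl⟩
  obtain ⟨A, C, hz⟩ : ∃ A C : ℂ, ∀ t : ℝ, z t = A * exp (β * t * I) + C * exp (-(β * t * I)) :=
    ⟨_, _, fun t => (vecToComplex_exp_smul_mulVec_of_mul_self_eq hβ hB φ t).trans
      (cos_mul_add_sin_mul_eq _ _ _)⟩
  rcases lt_trichotomy ‖C‖ ‖A‖ with hCA | hCA | hAC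
  · exact ⟨β, hθ.tendsto_div_atTop_of_norm_lt hCA hz, rfl⟩
  · obtain ⟨t, ht⟩ := exists_mul_exp_add_mul_exp_eq_zero hβ hCA.symm
    exact absurd ((hz t).trans ht) (hz₀ t)
  · refine ⟨-β, hθ.tendsto_div_atTop_of_norm_lt hAC fun t => ?_, abs_neg β⟩
    rw [hz, add_comm]
    push_cast
    ring_nf
end
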